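/- Suppose the integer k ≥ 0 satisfies ν := k − n/2 + 1 > 0. Then the ratio of consecutive generation densities has a finite limit at the origin: γ_k(z) → (1/B)·(1 + n/(2ν)) as z → 0⁺. In particular this limit exceeds 1/B, so near the origin the rank distribution deviates upward from the self-similar exponential law. -/

import Mathlib

/-!
As `z → 0` the factor `exp (-z² / (4λs))` increases to `1`, so by dominated convergence the
integral in `𝒜_k(z)` tends to the Gamma integral `∫₀^∞ s^(ν-1) e^(-λs) ds = Γ(ν) / λ^ν`.
Consecutive Gamma integrals differ by the factor `λ / ν` (from `Γ(ν + 1) = ν Γ(ν)`) and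
consecutive prefactors by `(k + 1) / (λB)`, so `γ_k(z) → (k + 1) / (Bν)`, and
`k + 1 = ν + n/2` turns this into `(1/B)(1 + n/(2ν))`.
-/

open Real MeasureTheory Set Filter Topology

/-- The steady-state generation-`k` density in the normalized distance
`z = |x|√(λ/D)` from the origin:
`𝒜_k(z) = (μ(λB)^k/(k!(4πD)^{n/2})) ∫₀^∞ s^{k−n/2} exp(−λs − z²/(4λs)) ds`. -/
noncomputable def steadyDensity (n : ℕ) (lam D B mu : ℝ) (k : ℕ) (z : ℝ) : ℝ :=
  (mu * (lam * B) ^ k / ((Nat.factorial k : ℝ) * (4 * π * D) ^ ((n : ℝ) / 2))) *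
    ∫ s in Set.Ioi (0:ℝ),
      s ^ ((k : ℝ) - (n : ℝ) / 2) * Real.exp (-lam * s - z ^ 2 / (4 * lam * s))

/-- The consecutive-generation ratio `γ_k(z) = 𝒜_k(z)/𝒜_{k+1}(z)`. -/
noncomputable def genRatio (n : ℕ) (lam D B mu : ℝ) (k : ℕ) (z : ℝ) : ℝ :=
  steadyDensity n lam D B mu k z / steadyDensity n lam D B mu (k + 1) z

lemma integrableOn_rpow_mul_exp_neg_mul {lam a : ℝ} (hlam : 0 < lam) (ha : -1 < a) :
    IntegrableOn (fun s : ℝ => s ^ a * exp (-lam * s)) (Ioi 0) := by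
  simpa only [rpow_one] using integrableOn_rpow_mul_exp_neg_mul_rpow ha one_pos hlam

lemma integral_rpow_mul_exp_neg_mul {lam a : ℝ} (hlam : 0 < lam) (ha : -1 < a) :
    ∫ s in Ioi (0 : ℝ), s ^ a * exp (-lam * s) = (1 / lam) ^ (a + 1) * Gamma (a + 1) := by
  rw [← integral_rpow_mul_exp_neg_mul_Ioi (by linarith) hlam, add_sub_cancel_right]
  simp only [neg_mul]

lemma tendsto_integral_rpow_mul_exp_heat_nhds_zero {lam a : ℝ} (hlam : 0 < lam) (ha : -1 < a) :
    Tendsto (fun z : ℝ => ∫ s in Ioi (0 : ℝ), s ^ a * exp (-lam * s - z ^ 2 / (4 * lam * s)))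
      (𝓝 0) (𝓝 ((1 / lam) ^ (a + 1) * Gamma (a + 1))) := by
  rw [← integral_rpow_mul_exp_neg_mul hlam ha]
  refine tendsto_integral_filter_of_dominated_convergence _ ?_ ?_
    (integrableOn_rpow_mul_exp_neg_mul hlam ha) ?_
  · refine .of_forall fun z => ContinuousOn.aestronglyMeasurable ?_ measurableSet_Ioi
    have hne : ∀ s ∈ Ioi (0 : ℝ), 4 * lam * s ≠ 0 := fun s (hs : 0 < s) => by positivity
    exact ContinuousOn.mul (fun s hs => (continuousAt_rpow_const s a
      (.inl (ne_of_gt hs))).continuousWithinAt) (by fun_prop (disch := assumption))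
  · refine .of_forall fun z => (ae_restrict_mem measurableSet_Ioi).mono fun s (hs : 0 < s) => ?_
    rw [norm_mul, norm_of_nonneg (rpow_nonneg hs.le a), norm_of_nonneg (exp_pos _).le]
    gcongr
    have : 0 ≤ z ^ 2 / (4 * lam * s) := by positivity
    linarith
  · refine (ae_restrict_mem measurableSet_Ioi).mono fun s (hs : 0 < s) => ?_
    have hcont : Continuous fun z : ℝ => s ^ a * exp (-lam * s - z ^ 2 / (4 * lam * s)) := by
      fun_prop
    simpa using hcont.tendsto 0

lemma one_div_rpow_mul_Gamma_div_add_one {lam ν : ℝ} (hlam : 0 < lam) (hν : 0 < ν) :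
    (1 / lam) ^ ν * Gamma ν / ((1 / lam) ^ (ν + 1) * Gamma (ν + 1)) = lam / ν := by
  have hpow : 0 < (1 / lam) ^ ν := by positivity
  have hΓ : 0 < Gamma ν := Gamma_pos_of_pos hν
  rw [rpow_add_one (by positivity), Gamma_add_one hν.ne']
  field_simp

noncomputable def steadyPrefactor (n : ℕ) (lam D B mu : ℝ) (k : ℕ) : ℝ :=
  mu * (lam * B) ^ k / ((Nat.factorial k : ℝ) * (4 * π * D) ^ ((n : ℝ) / 2))

lemma steadyPrefactor_ne_zero (n : ℕ) {lam D B mu : ℝ} (hlam : lam ≠ 0) (hD : 0 < D)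
    (hB : B ≠ 0) (hmu : mu ≠ 0) (k : ℕ) : steadyPrefactor n lam D B mu k ≠ 0 := by
  have hP : 0 < (4 * π * D) ^ ((n : ℝ) / 2) := by positivity
  unfold steadyPrefactor
  positivity

lemma steadyPrefactor_div_succ (n : ℕ) {lam D B mu : ℝ} (hlam : lam ≠ 0) (hD : 0 < D)
    (hB : B ≠ 0) (hmu : mu ≠ 0) (k : ℕ) :
    steadyPrefactor n lam D B mu k / steadyPrefactor n lam D B mu (k + 1) =
      (k + 1) / (lam * B) := by
  have hP : 0 < (4 * π * D) ^ ((n : ℝ) / 2) := by positivity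
  simp only [steadyPrefactor, pow_succ, Nat.factorial_succ, Nat.cast_mul, Nat.cast_succ]
  field_simp

lemma tendsto_steadyDensity_nhds_zero (n : ℕ) {lam : ℝ} (hlam : 0 < lam) (D B mu : ℝ) (k : ℕ)
    (hk : -1 < (k : ℝ) - n / 2) :
    Tendsto (steadyDensity n lam D B mu k) (𝓝 0)
      (𝓝 (steadyPrefactor n lam D B mu k *
        ((1 / lam) ^ ((k : ℝ) - n / 2 + 1) * Gamma ((k : ℝ) - n / 2 + 1)))) :=
  (tendsto_integral_rpow_mul_exp_heat_nhds_zero hlam hk).const_mul _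

lemma tendsto_genRatio_nhds_zero (n : ℕ) {lam D B mu : ℝ} (hlam : 0 < lam) (hD : 0 < D)
    (hB : B ≠ 0) (hmu : mu ≠ 0) (k : ℕ) (hν : 0 < (k : ℝ) - n / 2 + 1) :
    Tendsto (genRatio n lam D B mu k) (𝓝 0)
      (𝓝 ((k + 1) / (B * ((k : ℝ) - n / 2 + 1)))) := by
  have hnum := tendsto_steadyDensity_nhds_zero n hlam D B mu k (by linarith)
  have hden := tendsto_steadyDensity_nhds_zero n hlam D B mu (k + 1) (by push_cast; linarith)
  have hsucc : ((k + 1 : ℕ) : ℝ) - n / 2 = (k : ℝ) - n / 2 + 1 := by push_cast; ring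
  rw [hsucc] at hden
  have hden_ne : steadyPrefactor n lam D B mu (k + 1) * ((1 / lam) ^ ((k : ℝ) - n / 2 + 1 + 1) *
      Gamma ((k : ℝ) - n / 2 + 1 + 1)) ≠ 0 :=
    mul_ne_zero (steadyPrefactor_ne_zero n hlam.ne' hD hB hmu _)
      (by have := Gamma_pos_of_pos (by linarith : 0 < (k : ℝ) - n / 2 + 1 + 1); positivity)
  have hlim := hnum.div hden hden_ne
  rw [mul_div_mul_comm, steadyPrefactor_div_succ n hlam.ne' hD hB hmu,
    one_div_rpow_mul_Gamma_div_add_one hlam hν] at hlim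
  have hval : (k + 1) / (lam * B) * (lam / ((k : ℝ) - n / 2 + 1)) =
      (k + 1) / (B * ((k : ℝ) - n / 2 + 1)) := by
    field_simp
  rwa [hval] at hlim

/-- Upward deviation near the origin: if `ν = k − n/2 + 1 > 0`, then
`γ_k(z) → (1/B)(1 + n/(2ν))` as `z → 0⁺`, and this limit exceeds `1/B`. -/
theorem genRatio_at_origin_finite
    (n : ℕ) (hn : 1 ≤ n) (lam D B mu : ℝ)
    (hlam : 0 < lam) (hD : 0 < D) (hB : 0 < B) (hmu : 0 < mu)
    (k : ℕ) (hnu : 0 < (k : ℝ) - (n : ℝ) / 2 + 1) :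
    Filter.Tendsto (genRatio n lam D B mu k) (nhdsWithin 0 (Set.Ioi 0))
      (nhds ((1 / B) * (1 + (n : ℝ) / (2 * ((k : ℝ) - (n : ℝ) / 2 + 1))))) ∧
    1 / B < (1 / B) * (1 + (n : ℝ) / (2 * ((k : ℝ) - (n : ℝ) / 2 + 1))) := by
  have hlimit : (k + 1) / (B * ((k : ℝ) - n / 2 + 1)) =
      (1 / B) * (1 + (n : ℝ) / (2 * ((k : ℝ) - (n : ℝ) / 2 + 1))) := by
    rw [show (k : ℝ) + 1 = ((k : ℝ) - n / 2 + 1) + n / 2 by ring]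
    generalize (k : ℝ) - n / 2 + 1 = ν at hnu ⊢
    field_simp
  refine ⟨?_, ?_⟩
  · rw [← hlimit]
    exact (tendsto_genRatio_nhds_zero n hlam hD hB.ne' hmu.ne' k hnu).mono_left
      nhdsWithin_le_nhds
  · have hn' : (0 : ℝ) < n := by exact_mod_cast hn
    have : 0 < (n : ℝ) / (2 * ((k : ℝ) - n / 2 + 1)) := by positivity
    rw [lt_mul_iff_one_lt_right (by positivity)]
    linarith
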